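/- (Existence of boundary values for the decoded model output.) Let d ≥ 1 and let v : ℝ → ℝ^d. Suppose there are u, w ∈ ℝ^d with Var(u) > 0 such that v(x) − (x·u + w) → 0 as x → +∞, and u′, w′ ∈ ℝ^d with Var(u′) > 0 such that v(x) − (x·u′ + w′) → 0 as x → −∞. Then for any gain ρ ∈ ℝ^d, bias ε ∈ ℝ^d, and decoder vector W_dec ∈ ℝ^d, there exist constants B⁺, B⁻ ∈ ℝ (the boundary values) such that the decoded output ⟨LN(v(x)), W_dec⟩ → B⁺ as x → +∞ and ⟨LN(v(x)), W_dec⟩ → B⁻ as x → −∞, where ⟨·,·⟩ is the Euclidean inner product on ℝ^d. -/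

import Mathlib

open Filter Real

/-- Coordinate mean `mean(v) = (1/d) ∑ᵢ vᵢ` of a vector in ℝ^d. -/
noncomputable def vecMean {d : ℕ} (v : EuclideanSpace ℝ (Fin d)) : ℝ :=
  (∑ i, v i) / d

/-- Coordinate variance `Var(v) = (1/d) ∑ᵢ (vᵢ − mean(v))²` of a vector in ℝ^d. -/
noncomputable def vecVar {d : ℕ} (v : EuclideanSpace ℝ (Fin d)) : ℝ :=
  (∑ i, (v i - vecMean v) ^ 2) / d

/-- Layer Normalization with gain `ρ` and bias `ε`:
`LN(v) = ((v − mean(v)·𝟙)/√Var(v)) ⊙ ρ + ε` (entrywise). -/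
noncomputable def layerNorm {d : ℕ} (ρ ε : EuclideanSpace ℝ (Fin d))
    (v : EuclideanSpace ℝ (Fin d)) : EuclideanSpace ℝ (Fin d) :=
  WithLp.toLp 2 (fun i : Fin d => (v i - vecMean v) / Real.sqrt (vecVar v) * ρ i + ε i)

/-!
LayerNorm is invariant under positive rescaling and continuous wherever the variance is positive.
As `x → +∞`, the rescaled vector `x⁻¹ • v x` tends to `u`, so `LN (v x) = LN (x⁻¹ • v x) → LN u`;
as `x → -∞`, likewise `LN (v x) = LN (|x|⁻¹ • v x) → LN (-u')`.
-/

open Bornology Topology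

theorem tendsto_inv_smul_of_tendsto_sub_affine {𝕜 E : Type*} [NontriviallyNormedField 𝕜]
    [NormedAddCommGroup E] [NormedSpace 𝕜 E] {l : Filter 𝕜} (hl : l ≤ cobounded 𝕜)
    {v : 𝕜 → E} {u w : E} (hv : Tendsto (fun x => v x - (x • u + w)) l (𝓝 0)) :
    Tendsto (fun x => x⁻¹ • v x) l (𝓝 u) := by
  have hinv : Tendsto (fun x : 𝕜 => x⁻¹) l (𝓝 0) := tendsto_inv₀_cobounded.mono_left hl
  have hlim : Tendsto (fun x => u + x⁻¹ • (w + (v x - (x • u + w)))) l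
      (𝓝 (u + (0 : 𝕜) • (w + 0))) :=
    tendsto_const_nhds.add (hinv.smul (tendsto_const_nhds.add hv))
  rw [zero_smul, add_zero] at hlim
  refine hlim.congr' ?_
  filter_upwards [hl (eventually_ne_cobounded 0)] with x hx
  simp only [smul_add, smul_sub, smul_smul, inv_mul_cancel₀ hx, one_smul]
  abel

section LayerNorm

variable {d : ℕ}

theorem vecMean_smul (c : ℝ) (v : EuclideanSpace ℝ (Fin d)) :
    vecMean (c • v) = c * vecMean v := by
  simp only [vecMean, PiLp.smul_apply, smul_eq_mul, ← Finset.mul_sum, mul_div_assoc]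

theorem vecVar_smul (c : ℝ) (v : EuclideanSpace ℝ (Fin d)) :
    vecVar (c • v) = c ^ 2 * vecVar v := by
  simp only [vecVar, vecMean_smul, PiLp.smul_apply, smul_eq_mul, ← mul_sub, mul_pow,
    ← Finset.mul_sum, mul_div_assoc]

theorem vecVar_neg (v : EuclideanSpace ℝ (Fin d)) : vecVar (-v) = vecVar v := by
  rw [← neg_one_smul ℝ v, vecVar_smul, neg_one_sq, one_mul]

theorem layerNorm_smul_of_pos (ρ ε : EuclideanSpace ℝ (Fin d)) {c : ℝ} (hc : 0 < c)
    (v : EuclideanSpace ℝ (Fin d)) : layerNorm ρ ε (c • v) = layerNorm ρ ε v := by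
  ext i
  simp only [layerNorm, vecMean_smul, vecVar_smul, PiLp.smul_apply, smul_eq_mul, ← mul_sub,
    Real.sqrt_mul (sq_nonneg c), Real.sqrt_sq hc.le, mul_div_mul_left _ _ hc.ne']

@[fun_prop]
theorem continuous_vecMean : Continuous (vecMean (d := d)) := by
  unfold vecMean; fun_prop

@[fun_prop]
theorem continuous_vecVar : Continuous (vecVar (d := d)) := by
  unfold vecVar; fun_prop

theorem continuousAt_layerNorm (ρ ε : EuclideanSpace ℝ (Fin d)) {v : EuclideanSpace ℝ (Fin d)}
    (hv : 0 < vecVar v) : ContinuousAt (layerNorm ρ ε) v := by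
  have hsqrt : Real.sqrt (vecVar v) ≠ 0 := (Real.sqrt_pos.mpr hv).ne'
  unfold layerNorm
  refine (PiLp.continuous_toLp 2 _).continuousAt.comp (continuousAt_pi.mpr fun i => ?_)
  fun_prop (disch := exact hsqrt)

end LayerNorm

section Asymptotics

variable {d : ℕ} (ρ ε : EuclideanSpace ℝ (Fin d)) {v : ℝ → EuclideanSpace ℝ (Fin d)}
  {u w : EuclideanSpace ℝ (Fin d)}

theorem tendsto_layerNorm_atTop (hu : 0 < vecVar u)
    (hv : Tendsto (fun x : ℝ => v x - (x • u + w)) atTop (𝓝 0)) :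
    Tendsto (fun x => layerNorm ρ ε (v x)) atTop (𝓝 (layerNorm ρ ε u)) := by
  refine ((continuousAt_layerNorm ρ ε hu).tendsto.comp
    (tendsto_inv_smul_of_tendsto_sub_affine IsOrderBornology.atTop_le_cobounded hv)).congr' ?_
  filter_upwards [eventually_gt_atTop 0] with x hx
  exact layerNorm_smul_of_pos ρ ε (inv_pos.2 hx) (v x)

theorem tendsto_layerNorm_atBot (hu : 0 < vecVar u)
    (hv : Tendsto (fun x : ℝ => v x - (x • u + w)) atBot (𝓝 0)) :
    Tendsto (fun x => layerNorm ρ ε (v x)) atBot (𝓝 (layerNorm ρ ε (-u))) := by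
  have hv_neg : Tendsto (fun y : ℝ => v (-y) - (y • -u + w)) atTop (𝓝 0) := by
    simpa only [Function.comp_def, neg_smul, smul_neg] using hv.comp tendsto_neg_atTop_atBot
  have h := (tendsto_layerNorm_atTop ρ ε (by rwa [vecVar_neg]) hv_neg).comp
    tendsto_neg_atBot_atTop
  simpa only [Function.comp_def, neg_neg] using h

end Asymptotics

theorem stmt_11_general (d : ℕ) (v : ℝ → EuclideanSpace ℝ (Fin d))
    (u w : EuclideanSpace ℝ (Fin d)) (hu : 0 < vecVar u)
    (hv : Filter.Tendsto (fun x : ℝ => v x - (x • u + w)) Filter.atTop (nhds 0))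
    (u' w' : EuclideanSpace ℝ (Fin d)) (hu' : 0 < vecVar u')
    (hv' : Filter.Tendsto (fun x : ℝ => v x - (x • u' + w')) Filter.atBot (nhds 0))
    (ρ ε Wdec : EuclideanSpace ℝ (Fin d)) :
    ∃ Bplus Bminus : ℝ,
      Filter.Tendsto (fun x : ℝ => (inner ℝ (layerNorm ρ ε (v x)) Wdec : ℝ))
        Filter.atTop (nhds Bplus) ∧
      Filter.Tendsto (fun x : ℝ => (inner ℝ (layerNorm ρ ε (v x)) Wdec : ℝ))
        Filter.atBot (nhds Bminus) :=
  ⟨_, _, (tendsto_layerNorm_atTop ρ ε hu hv).inner tendsto_const_nhds,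
    (tendsto_layerNorm_atBot ρ ε hu' hv').inner tendsto_const_nhds⟩

theorem stmt_11 (d : ℕ) (hd : 1 ≤ d) (v : ℝ → EuclideanSpace ℝ (Fin d))
    (u w : EuclideanSpace ℝ (Fin d)) (hu : 0 < vecVar u)
    (hv : Filter.Tendsto (fun x : ℝ => v x - (x • u + w)) Filter.atTop (nhds 0))
    (u' w' : EuclideanSpace ℝ (Fin d)) (hu' : 0 < vecVar u')
    (hv' : Filter.Tendsto (fun x : ℝ => v x - (x • u' + w')) Filter.atBot (nhds 0))
    (ρ ε Wdec : EuclideanSpace ℝ (Fin d)) :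
    ∃ Bplus Bminus : ℝ,
      Filter.Tendsto (fun x : ℝ => (inner ℝ (layerNorm ρ ε (v x)) Wdec : ℝ))
        Filter.atTop (nhds Bplus) ∧
      Filter.Tendsto (fun x : ℝ => (inner ℝ (layerNorm ρ ε (v x)) Wdec : ℝ))
        Filter.atBot (nhds Bminus) :=
  stmt_11_general d v u w hu hv u' w' hu' hv' ρ ε Wdec
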